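/- arXiv:1404.2454 — 6 statements merged into one kernel-verified Lean document; each statement's English description precedes it below -/
import Mathlib

section
/- Let H be a Hermitian matrix on a finite-dimensional Hilbert space and P an orthogonal projection. Then lim_{N→∞} (P e^{-iHt/N} P)^N = P e^{-itPHP} P in operator norm, for each fixed t ∈ ℝ. -/
/-!
Write `K = PHP` and `s = -it/N`. Both `P e^{sH} P` and `P e^{sK} P` are `P + sK + o(s)`, so they
differ by `o(1/N)`; as `‖P‖ ≤ 1`, both have norm at most `1 + C/N`, and the telescoping estimate
`‖aᴺ - bᴺ‖ ≤ N (1 + C/N)ᴺ⁻¹ ‖a - b‖ ≤ N e^C ‖a - b‖` shows that their `N`-th powers have the same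
limit. Since `P` commutes with `K`, `(P e^{sK} P)ᴺ = P e^{NsK} P` exactly.
-/

open NormedSpace Filter Topology

theorem norm_pow_succ_sub_pow_succ_le {R : Type*} [NormedRing R] {a b : R} {M : ℝ}
    (ha : ‖a‖ ≤ M) (hb : ‖b‖ ≤ M) (n : ℕ) :
    ‖a ^ (n + 1) - b ^ (n + 1)‖ ≤ (n + 1) * M ^ n * ‖a - b‖ := by
  have hM : 0 ≤ M := (norm_nonneg a).trans ha
  induction n with
  | zero => simp
  | succ n ih =>
    have hsplit : a ^ (n + 2) - b ^ (n + 2) =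
        a ^ (n + 1) * (a - b) + (a ^ (n + 1) - b ^ (n + 1)) * b := by
      noncomm_ring
    have hpow : ‖a ^ (n + 1)‖ ≤ M ^ (n + 1) :=
      (norm_pow_le' a n.succ_pos).trans (pow_le_pow_left₀ (norm_nonneg a) ha _)
    calc ‖a ^ (n + 2) - b ^ (n + 2)‖
        ≤ ‖a ^ (n + 1)‖ * ‖a - b‖ + ‖a ^ (n + 1) - b ^ (n + 1)‖ * ‖b‖ := by
          rw [hsplit]
          exact (norm_add_le _ _).trans (add_le_add (norm_mul_le _ _) (norm_mul_le _ _))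
      _ ≤ M ^ (n + 1) * ‖a - b‖ + ((n + 1) * M ^ n * ‖a - b‖) * M := by gcongr
      _ = (↑(n + 1) + 1) * M ^ (n + 1) * ‖a - b‖ := by push_cast; ring

section Chernoff

variable {𝕜 R : Type*} [RCLike 𝕜] [NormedRing R] [NormedSpace 𝕜 R]

theorem tendsto_pow_sub_pow_of_tendsto_natCast_smul_sub {p x : R} (hp : ‖p‖ ≤ 1) {a b : ℕ → R}
    (ha : Tendsto (fun N : ℕ => (N : 𝕜) • (a N - p)) atTop (𝓝 x))
    (hb : Tendsto (fun N : ℕ => (N : 𝕜) • (b N - p)) atTop (𝓝 x)) :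
    Tendsto (fun N => a N ^ N - b N ^ N) atTop (𝓝 0) := by
  set C := ‖x‖ + 1
  have hC : 0 ≤ C := by positivity
  have eventually_norm_le : ∀ c : ℕ → R, Tendsto (fun N : ℕ => (N : 𝕜) • (c N - p)) atTop (𝓝 x) →
      ∀ᶠ N in atTop, ‖c N‖ ≤ 1 + C / N := by
    intro c hc
    filter_upwards [hc.norm.eventually (gt_mem_nhds (lt_add_one ‖x‖)), eventually_ne_atTop 0]
      with N hcN hN
    have hNpos : (0 : ℝ) < N := by positivity
    rw [norm_smul, RCLike.norm_natCast] at hcN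
    calc ‖c N‖ = ‖p + (c N - p)‖ := by rw [add_sub_cancel]
      _ ≤ 1 + ‖c N - p‖ := (norm_add_le _ _).trans (by gcongr)
      _ ≤ 1 + C / N := by
        gcongr 1 + ?_
        rw [le_div_iff₀ hNpos, mul_comm]
        exact hcN.le
  have hab : Tendsto (fun N : ℕ => (N : 𝕜) • (a N - b N)) atTop (𝓝 0) := by
    simpa [← smul_sub] using ha.sub hb
  refine squeeze_zero_norm' ?_ (by simpa using hab.norm.const_mul (Real.exp C))
  filter_upwards [eventually_norm_le a ha, eventually_norm_le b hb, eventually_ne_atTop 0]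
    with N haN hbN hN
  obtain ⟨m, rfl⟩ := Nat.exists_eq_succ_of_ne_zero hN
  have hpow : (1 + C / (m + 1 : ℕ)) ^ m ≤ Real.exp C := calc
    (1 + C / (m + 1 : ℕ)) ^ m ≤ (1 + C / (m + 1 : ℕ)) ^ (m + 1) :=
      pow_le_pow_right₀ (le_add_of_nonneg_right (by positivity)) m.le_succ
    _ ≤ Real.exp C := by
      simpa [sub_eq_add_neg, neg_div] using Real.one_sub_div_pow_le_exp_neg (n := m + 1) (t := -C)
        (by linarith [(m + 1 : ℕ).cast_nonneg (α := ℝ)])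
  calc ‖a (m + 1) ^ (m + 1) - b (m + 1) ^ (m + 1)‖
      ≤ (m + 1) * (1 + C / (m + 1 : ℕ)) ^ m * ‖a (m + 1) - b (m + 1)‖ :=
        norm_pow_succ_sub_pow_succ_le haN hbN m
    _ = (1 + C / (m + 1 : ℕ)) ^ m * ((m + 1 : ℕ) * ‖a (m + 1) - b (m + 1)‖) := by
        push_cast; ring
    _ ≤ Real.exp C * ‖((m + 1 : ℕ) : 𝕜) • (a (m + 1) - b (m + 1))‖ := by
        rw [norm_smul, RCLike.norm_natCast]
        gcongr

end Chernoff

namespace IsIdempotentElem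

variable {R : Type*} [Semigroup R] {p : R}

theorem mul_corner (hp : IsIdempotentElem p) (x : R) : p * (p * x * p) = p * x * p := by
  rw [← mul_assoc, ← mul_assoc, hp.eq]

theorem corner_mul (hp : IsIdempotentElem p) (x : R) : p * x * p * p = p * x * p := by
  rw [mul_assoc, hp.eq]

theorem commute_corner (hp : IsIdempotentElem p) (x : R) : Commute p (p * x * p) :=
  (hp.mul_corner x).trans (hp.corner_mul x).symm

end IsIdempotentElem

section CornerExp

variable {𝕂 A : Type*} [RCLike 𝕂] [NormedRing A] [NormedAlgebra 𝕂 A] [CompleteSpace A]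

theorem tendsto_natCast_smul_exp_div_smul_sub_one (z : 𝕂) (x : A) :
    Tendsto (fun N : ℕ => (N : 𝕂) • (exp ((z / N) • x) - 1)) atTop (𝓝 (z • x)) := by
  have hderiv : HasDerivAt (fun u : 𝕂 => exp (u • z • x)) (z • x) 0 := by
    simpa using hasDerivAt_exp_smul_const (z • x) (0 : 𝕂)
  have hinv : Tendsto (fun N : ℕ => (N : 𝕂)⁻¹) atTop (𝓝[≠] 0) :=
    tendsto_nhdsWithin_iff.2 ⟨tendsto_inv_atTop_nhds_zero_nat,
      (eventually_ne_atTop 0).mono fun N hN => by simpa using hN⟩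
  refine (hderiv.tendsto_slope_zero.comp hinv).congr fun N => ?_
  simp [smul_smul, div_eq_inv_mul]

variable {p : A}

theorem tendsto_natCast_smul_corner_exp_sub (hp : IsIdempotentElem p) (z : 𝕂) (x : A) :
    Tendsto (fun N : ℕ => (N : 𝕂) • (p * exp ((z / N) • x) * p - p)) atTop
      (𝓝 (z • (p * x * p))) := by
  have hcorner := ((tendsto_natCast_smul_exp_div_smul_sub_one z x).const_mul p).mul_const p
  refine (hcorner.congr fun N => ?_).trans (by simp)
  rw [mul_smul_comm, smul_mul_assoc, mul_sub, sub_mul, mul_one, hp.eq]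

theorem corner_exp_div_smul_corner_pow (hp : IsIdempotentElem p) (x : A) (z : 𝕂) {N : ℕ}
    (hN : N ≠ 0) :
    (p * exp ((z / N) • (p * x * p)) * p) ^ N = p * exp (z • (p * x * p)) * p := by
  have hcomm : ∀ w : 𝕂, Commute p (exp (w • (p * x * p))) := fun w =>
    ((hp.commute_corner x).smul_right w).exp_right
  have hcorner : ∀ w : 𝕂, p * exp (w • (p * x * p)) * p = p * exp (w • (p * x * p)) := fun w => by
    rw [mul_assoc, ← (hcomm w).eq, ← mul_assoc, hp.eq]
  let _ : NormedAlgebra ℚ A := NormedAlgebra.restrictScalars ℚ 𝕂 A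
  rw [hcorner, hcorner, (hcomm _).mul_pow, hp.pow_eq hN, ← NormedSpace.exp_nsmul,
    ← Nat.cast_smul_eq_nsmul 𝕂, smul_smul, mul_div_cancel₀ _ (Nat.cast_ne_zero.2 hN)]

theorem tendsto_corner_exp_div_smul_pow (hp : IsIdempotentElem p) (hp1 : ‖p‖ ≤ 1) (x : A)
    (z : 𝕂) :
    Tendsto (fun N : ℕ => (p * exp ((z / N) • x) * p) ^ N) atTop
      (𝓝 (p * exp (z • (p * x * p)) * p)) := by
  have hcorner : p * (p * x * p) * p = p * x * p := by rw [hp.mul_corner, hp.corner_mul]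
  have hdiff := tendsto_pow_sub_pow_of_tendsto_natCast_smul_sub hp1
    (tendsto_natCast_smul_corner_exp_sub hp z x)
    (hcorner ▸ tendsto_natCast_smul_corner_exp_sub hp z (p * x * p))
  have hconst : Tendsto (fun N : ℕ => (p * exp ((z / N) • (p * x * p)) * p) ^ N) atTop
      (𝓝 (p * exp (z • (p * x * p)) * p)) :=
    tendsto_const_nhds.congr' <| (eventually_ne_atTop 0).mono fun N hN =>
      (corner_exp_div_smul_corner_pow hp x z hN).symm
  simpa using hdiff.add hconst

end CornerExp

theorem zeno_projection_limit_general {n : ℕ} (H P : Matrix (Fin n) (Fin n) ℂ)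
    (hP : P.IsHermitian) (hP2 : P * P = P) (t : ℝ) :
    Tendsto
      (fun N : ℕ =>
        (P * NormedSpace.exp ((-(Complex.I * t) / (N : ℂ)) • H) * P) ^ N)
      atTop
      (nhds (P * NormedSpace.exp ((-(Complex.I * t)) • (P * H * P)) * P)) := by
  -- The L2 operator norm induces the product topology on matrices (definitionally) and makes
  -- orthogonal projections contractions.
  open scoped Matrix.Norms.L2Operator in
  exact tendsto_corner_exp_div_smul_pow hP2 (IsStarProjection.norm_le P ⟨hP2, hP⟩) H _

/-- Zeno dynamics for a general orthogonal projection: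
`(P e^{-iHt/N} P)^N → P e^{-it PHP} P` as `N → ∞`. -/
theorem zeno_projection_limit {n : ℕ} (H P : Matrix (Fin n) (Fin n) ℂ)
    (hH : H.IsHermitian) (hP : P.IsHermitian) (hP2 : P * P = P) (t : ℝ) :
    Tendsto
      (fun N : ℕ =>
        (P * NormedSpace.exp ((-(Complex.I * t) / (N : ℂ)) • H) * P) ^ N)
      atTop
      (nhds (P * NormedSpace.exp ((-(Complex.I * t)) • (P * H * P)) * P)) :=
  zeno_projection_limit_general H P hP hP2 t
end

section
/- Let H be Hermitian on ℂ^n and P a one-dimensional orthogonal projection P = |ψ₀⟩⟨ψ₀|. Then (P e^{-iHt/N})^N ψ₀ converges as N → ∞ to e^{-it⟨ψ₀,Hψ₀⟩} ψ₀; i.e. the Zeno limit freezes the state up to a phase given by the expectation of H. -/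
/-!
Since `P = |ψ⟩⟨ψ|` has rank one, `(P A)ᴺ ψ = ⟨ψ, A ψ⟩ᴺ ψ`, so everything reduces to the scalar
sequence `g (z / N) ^ N` with `g s = ⟨ψ, e^{sH} ψ⟩` and `z = -it`. As `g 0 = 1` and `g' 0 = ⟨ψ, H ψ⟩`,
we get `N (g (z / N) - 1) → z ⟨ψ, H ψ⟩`, and `(1 + w_N)ᴺ → e^w` whenever `N w_N → w`.
-/

open Matrix NormedSpace Filter Topology

-- Any Banach-algebra norm on matrices would do: it serves only to differentiate `exp`.
attribute [local instance] Matrix.linftyOpNormedAddCommGroup Matrix.linftyOpNormedRing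
  Matrix.linftyOpNormedAlgebra

theorem Matrix.vecMulVec_mul_pow_mulVec {n R : Type*} [Fintype n] [DecidableEq n] [CommSemiring R]
    (u w : n → R) (A : Matrix n n R) (N : ℕ) :
    (vecMulVec u w * A) ^ N *ᵥ u = (w ⬝ᵥ (A *ᵥ u)) ^ N • u := by
  induction N with
  | zero => simp
  | succ N ih =>
    rw [pow_succ', ← mulVec_mulVec, ih, mulVec_smul, ← mulVec_mulVec, vecMulVec_mulVec,
      op_smul_eq_smul, smul_smul, pow_succ]

theorem HasDerivAt.tendsto_nat_mul_sub {𝕜 E : Type*} [RCLike 𝕜] [NormedAddCommGroup E]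
    [NormedSpace 𝕜 E] {f : 𝕜 → E} {f' : E} (hf : HasDerivAt f f' 0) (z : 𝕜) :
    Tendsto (fun N : ℕ => (N : 𝕜) • (f (z / N) - f 0)) atTop (𝓝 (z • f')) := by
  have hfz : HasDerivAt (fun s => f (s * z)) (z • f') 0 := by
    simpa [Function.comp_def] using
      hf.scomp_of_eq (0 : 𝕜) ((hasDerivAt_id 0).mul_const z) (by simp)
  have hinv : Tendsto (fun N : ℕ => (N : 𝕜)⁻¹) atTop (𝓝[≠] 0) :=
    tendsto_nhdsWithin_of_tendsto_nhds_of_eventually_within _ tendsto_inv_atTop_nhds_zero_nat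
      (eventually_ne_atTop 0 |>.mono fun N hN => by simpa using hN)
  refine ((hasDerivAt_iff_tendsto_slope.mp hfz).comp hinv).congr fun N => ?_
  simp [slope_def_module, div_eq_inv_mul]

theorem Matrix.hasDerivAt_dotProduct_exp_smul_mulVec {n : Type*} [Fintype n] [DecidableEq n]
    (u v : n → ℂ) (A : Matrix n n ℂ) :
    HasDerivAt (fun s : ℂ => u ⬝ᵥ (exp (s • A) *ᵥ v)) (u ⬝ᵥ (A *ᵥ v)) 0 := by
  let L : Matrix n n ℂ →ₗ[ℂ] ℂ :=
    { toFun := fun M => u ⬝ᵥ (M *ᵥ v)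
      map_add' := fun M M' => by simp [add_mulVec, dotProduct_add]
      map_smul' := fun r M => by simp [smul_mulVec, dotProduct_smul] }
  have hexp := hasDerivAt_exp_smul_const' (𝕂 := ℂ) A 0
  rw [zero_smul, exp_zero, mul_one] at hexp
  exact (LinearMap.toContinuousLinearMap L).hasFDerivAt.comp_hasDerivAt 0 hexp

theorem zeno_rank_one_freezing_general {n : ℕ} (H : Matrix (Fin n) (Fin n) ℂ)
    (ψ : Fin n → ℂ) (hψ : star ψ ⬝ᵥ ψ = 1) (t : ℝ) :
    Tendsto
      (fun N : ℕ =>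
        ((vecMulVec ψ (star ψ) * exp ((-(Complex.I * t) / (N : ℂ)) • H)) ^ N) *ᵥ ψ)
      atTop
      (nhds (Complex.exp (-(Complex.I * t) * (star ψ ⬝ᵥ (H *ᵥ ψ))) • ψ)) := by
  set z : ℂ := -(Complex.I * t)
  set g : ℂ → ℂ := fun s => star ψ ⬝ᵥ (exp (s • H) *ᵥ ψ)
  have hlin : Tendsto (fun N : ℕ => (N : ℂ) * (g (z / N) - 1)) atTop
      (𝓝 (z * (star ψ ⬝ᵥ (H *ᵥ ψ)))) := by
    simpa [g, hψ] using (hasDerivAt_dotProduct_exp_smul_mulVec (star ψ) ψ H).tendsto_nat_mul_sub z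
  have hpow := (Complex.tendsto_one_add_pow_exp_of_tendsto hlin).smul_const ψ
  simp only [add_sub_cancel] at hpow
  exact hpow.congr fun N => (vecMulVec_mul_pow_mulVec ψ (star ψ) _ N).symm

/-- Zeno limit for a rank-one projection `P = |ψ₀⟩⟨ψ₀|`:
`(P e^{-iHt/N})^N ψ₀ → e^{-it⟨ψ₀,Hψ₀⟩} ψ₀`. -/
theorem zeno_rank_one_freezing {n : ℕ} (H : Matrix (Fin n) (Fin n) ℂ)
    (hH : H.IsHermitian) (ψ : Fin n → ℂ) (hψ : star ψ ⬝ᵥ ψ = 1) (t : ℝ) :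
    Tendsto
      (fun N : ℕ =>
        ((vecMulVec ψ (star ψ) * exp ((-(Complex.I * t) / (N : ℂ)) • H)) ^ N) *ᵥ ψ)
      atTop
      (nhds (Complex.exp (-(Complex.I * t) * (star ψ ⬝ᵥ (H *ᵥ ψ))) • ψ)) :=
  zeno_rank_one_freezing_general H ψ hψ t
end

section
/- Sufficiency direction of stability for singularly perturbed systems: if Γ₄ ∈ M_m(ℂ) and Γ₀ = Γ₁ − Γ₂Γ₄^{−1}Γ₃ ∈ M_r(ℂ) are both strictly Hurwitz, then there exists k₀ such that for all k > k₀ every eigenvalue λ of the block matrix [[Γ₁, Γ₂],[k²Γ₃, k²Γ₄]] satisfies Re λ < 0. -/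
open Matrix Filter Topology

attribute [local instance] Matrix.linftyOpNormedAddCommGroup Matrix.linftyOpNormedSpace
  Matrix.linftyOpNormedRing Matrix.linftyOpNormedAlgebra

/-- Schur-complement step: an eigenvalue of the block matrix with nonnegative real part is an
eigenvalue of the perturbed Schur complement. -/
private theorem schur_step {r m : ℕ}
    (Γ₁ : Matrix (Fin r) (Fin r) ℂ) (Γ₂ : Matrix (Fin r) (Fin m) ℂ)
    (Γ₃ : Matrix (Fin m) (Fin r) ℂ) (Γ₄ : Matrix (Fin m) (Fin m) ℂ)
    (hres : ∀ μ : ℂ, 0 ≤ μ.re → IsUnit (algebraMap ℂ (Matrix (Fin m) (Fin m) ℂ) μ - Γ₄))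
    (k : ℝ) (hk : 0 < k) (lam : ℂ) (hlam : 0 ≤ lam.re)
    (hmem : lam ∈ spectrum ℂ
      (fromBlocks Γ₁ Γ₂ (((k : ℂ) ^ 2) • Γ₃) (((k : ℂ) ^ 2) • Γ₄))) :
    lam ∈ spectrum ℂ
      (Γ₁ + Γ₂ * Ring.inverse (algebraMap ℂ (Matrix (Fin m) (Fin m) ℂ) (lam / (k:ℂ)^2) - Γ₄) * Γ₃) := by
  have hk2 : ((k:ℂ)^2) ≠ 0 := pow_ne_zero 2 (Complex.ofReal_ne_zero.mpr hk.ne')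
  set μ : ℂ := lam / (k:ℂ)^2 with hμ
  have hμre : 0 ≤ μ.re := by
    rw [hμ, show ((k:ℂ)^2) = ((k^2 : ℝ) : ℂ) by push_cast; ring, Complex.div_ofReal_re]
    positivity
  have hDunit : IsUnit (algebraMap ℂ (Matrix (Fin m) (Fin m) ℂ) μ - Γ₄) := hres μ hμre
  set E : Matrix (Fin m) (Fin m) ℂ := algebraMap ℂ _ μ - Γ₄ with hE
  set D : Matrix (Fin m) (Fin m) ℂ := algebraMap ℂ _ lam - ((k:ℂ)^2) • Γ₄ with hD
  have hDE : D = ((k:ℂ)^2) • E := by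
    rw [hD, hE, smul_sub, Algebra.algebraMap_eq_smul_one, Algebra.algebraMap_eq_smul_one,
      smul_smul, hμ]
    congr 1
    rw [mul_div_cancel₀ _ hk2]
  have hDunit' : IsUnit D := by
    rw [hDE]
    exact (IsUnit.smul (Units.mk0 _ hk2) hDunit)
  haveI : Invertible D := D.invertibleOfIsUnitDet ((Matrix.isUnit_iff_isUnit_det D).mp hDunit')
  have hscalar : algebraMap ℂ (Matrix (Fin r ⊕ Fin m) (Fin r ⊕ Fin m) ℂ) lam
      = fromBlocks (algebraMap ℂ (Matrix (Fin r) (Fin r) ℂ) lam) 0 0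
          (algebraMap ℂ (Matrix (Fin m) (Fin m) ℂ) lam) := by
    simp only [Algebra.algebraMap_eq_smul_one, ← fromBlocks_one, fromBlocks_smul, smul_zero]
  have hblock : algebraMap ℂ (Matrix (Fin r ⊕ Fin m) (Fin r ⊕ Fin m) ℂ) lam
      - fromBlocks Γ₁ Γ₂ (((k:ℂ)^2) • Γ₃) (((k:ℂ)^2) • Γ₄)
      = fromBlocks (algebraMap ℂ (Matrix (Fin r) (Fin r) ℂ) lam - Γ₁) (-Γ₂)
          (-(((k:ℂ)^2) • Γ₃)) D := by
    rw [hscalar, hD, sub_eq_add_neg, fromBlocks_neg, fromBlocks_add]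
    simp [sub_eq_add_neg]
  have hsimp : (algebraMap ℂ (Matrix (Fin r) (Fin r) ℂ) lam - Γ₁)
      - (-Γ₂) * ⅟D * (-(((k:ℂ)^2) • Γ₃))
      = algebraMap ℂ (Matrix (Fin r) (Fin r) ℂ) lam - (Γ₁ + Γ₂ * Ring.inverse E * Γ₃) := by
    have hEdet : IsUnit E.det := (Matrix.isUnit_iff_isUnit_det E).mp hDunit
    haveI : Invertible ((k:ℂ)^2) := invertibleOfNonzero hk2
    have h2 : D⁻¹ = ((k:ℂ)^2)⁻¹ • E⁻¹ := by
      rw [hDE, Matrix.inv_smul _ _ hEdet, invOf_eq_inv]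
    have h3 : (-Γ₂) * ⅟D * (-(((k:ℂ)^2) • Γ₃)) = Γ₂ * Ring.inverse E * Γ₃ := by
      rw [invOf_eq_nonsing_inv, h2, ← Matrix.nonsing_inv_eq_ringInverse]
      simp only [Matrix.neg_mul, Matrix.mul_neg, neg_neg, Matrix.mul_smul, Matrix.smul_mul,
        smul_smul, inv_mul_cancel₀ hk2, mul_inv_cancel₀ hk2, smul_neg, one_smul, neg_neg]
    rw [h3, sub_sub]
  rw [spectrum.mem_iff] at hmem ⊢
  intro hsmall
  apply hmem
  rw [hblock, Matrix.isUnit_iff_isUnit_det, Matrix.det_fromBlocks₂₂]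
  exact ((Matrix.isUnit_iff_isUnit_det D).mp hDunit').mul
    (by rw [hsimp]; exact (Matrix.isUnit_iff_isUnit_det _).mp hsmall)

/-- Sufficiency direction of stability for singularly perturbed systems: if
`Γ₄` and the Schur complement `Γ₀ = Γ₁ − Γ₂Γ₄⁻¹Γ₃` are both strictly Hurwitz,
then there exists `k₀` such that for all `k > k₀` every eigenvalue `λ` of
`[[Γ₁, Γ₂],[k²Γ₃, k²Γ₄]]` satisfies `Re λ < 0`. -/
theorem singular_perturbation_stability_sufficiency {r m : ℕ}
    (Γ₁ : Matrix (Fin r) (Fin r) ℂ) (Γ₂ : Matrix (Fin r) (Fin m) ℂ)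
    (Γ₃ : Matrix (Fin m) (Fin r) ℂ) (Γ₄ : Matrix (Fin m) (Fin m) ℂ)
    (hΓ₄ : IsUnit Γ₄.det)
    (hHurwitz₄ : ∀ ν ∈ spectrum ℂ Γ₄, ν.re < 0)
    (hHurwitz₀ : ∀ μ ∈ spectrum ℂ (Γ₁ - Γ₂ * Γ₄⁻¹ * Γ₃), μ.re < 0) :
    ∃ k₀ : ℝ, ∀ k : ℝ, k₀ < k →
      ∀ lam ∈ spectrum ℂ
          (fromBlocks Γ₁ Γ₂ (((k : ℂ) ^ 2) • Γ₃) (((k : ℂ) ^ 2) • Γ₄)),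
        lam.re < 0 := by
  classical
  have hres : ∀ μ : ℂ, 0 ≤ μ.re → IsUnit (algebraMap ℂ (Matrix (Fin m) (Fin m) ℂ) μ - Γ₄) := by
    intro μ hμ
    by_contra h
    exact absurd (hHurwitz₄ μ (spectrum.mem_iff.mpr h)) (not_lt.mpr hμ)
  by_contra hcon
  push_neg at hcon
  choose k hk lam hlam hre using fun n : ℕ => hcon ((n : ℝ) + 1)
  have hk1 : ∀ n, 1 ≤ k n := fun n =>
    le_trans (le_add_of_nonneg_left (Nat.cast_nonneg n)) (hk n).le
  have hkpos : ∀ n, 0 < k n := fun n => lt_of_lt_of_le one_pos (hk1 n)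
  set R4 : ℂ → Matrix (Fin m) (Fin m) ℂ :=
    fun z => Ring.inverse (algebraMap ℂ (Matrix (Fin m) (Fin m) ℂ) z - Γ₄) with hR4
  set A : ℂ → Matrix (Fin r) (Fin r) ℂ := fun z => Γ₁ + Γ₂ * R4 z * Γ₃ with hA
  set μ : ℕ → ℂ := fun n => lam n / ((k n : ℂ))^2 with hμdef
  have hstep : ∀ n, lam n ∈ spectrum ℂ (A (μ n)) :=
    fun n => schur_step Γ₁ Γ₂ Γ₃ Γ₄ hres (k n) (hkpos n) (lam n) (hre n) (hlam n)
  -- first (crude) bound on the eigenvalues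
  set P : Matrix (Fin r ⊕ Fin m) (Fin r ⊕ Fin m) ℂ := fromBlocks Γ₁ Γ₂ 0 0 with hP
  set Q : Matrix (Fin r ⊕ Fin m) (Fin r ⊕ Fin m) ℂ := fromBlocks 0 0 Γ₃ Γ₄ with hQ
  set c : ℝ := (‖P‖ + ‖Q‖) * ‖(1 : Matrix (Fin r ⊕ Fin m) (Fin r ⊕ Fin m) ℂ)‖ with hc
  have hc0 : 0 ≤ c := mul_nonneg (add_nonneg (norm_nonneg _) (norm_nonneg _)) (norm_nonneg _)
  have hknorm : ∀ n, ‖((k n : ℂ))^2‖ = (k n)^2 := by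
    intro n
    rw [norm_pow, Complex.norm_real, Real.norm_eq_abs, abs_of_pos (hkpos n)]
  have hnorm1 : ∀ n, ‖lam n‖ ≤ c * (k n)^2 := by
    intro n
    have hMeq : fromBlocks Γ₁ Γ₂ (((k n : ℂ)^2) • Γ₃) (((k n : ℂ)^2) • Γ₄)
        = P + ((k n : ℂ)^2) • Q := by
      rw [hP, hQ, fromBlocks_smul, fromBlocks_add]
      simp
    have h1 : ‖lam n‖ ≤ ‖fromBlocks Γ₁ Γ₂ (((k n : ℂ)^2) • Γ₃) (((k n : ℂ)^2) • Γ₄)‖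
        * ‖(1 : Matrix (Fin r ⊕ Fin m) (Fin r ⊕ Fin m) ℂ)‖ :=
      spectrum.norm_le_norm_mul_of_mem (hlam n)
    have h2 : ‖fromBlocks Γ₁ Γ₂ (((k n : ℂ)^2) • Γ₃) (((k n : ℂ)^2) • Γ₄)‖
        ≤ ‖P‖ + (k n)^2 * ‖Q‖ := by
      rw [hMeq]
      refine le_trans (norm_add_le _ _) ?_
      rw [norm_smul, hknorm n]
    have hk2ge : 1 ≤ (k n)^2 := one_le_pow₀ (hk1 n)
    rw [hc]
    have h5 := mul_le_mul_of_nonneg_right h2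
      (norm_nonneg (1 : Matrix (Fin r ⊕ Fin m) (Fin r ⊕ Fin m) ℂ))
    nlinarith [mul_nonneg (mul_nonneg (sub_nonneg.mpr hk2ge) (norm_nonneg P))
      (norm_nonneg (1 : Matrix (Fin r ⊕ Fin m) (Fin r ⊕ Fin m) ℂ))]
  have hμre : ∀ n, 0 ≤ (μ n).re := by
    intro n
    rw [hμdef]
    simp only
    rw [show ((k n : ℂ)^2) = (((k n)^2 : ℝ) : ℂ) by push_cast; ring, Complex.div_ofReal_re]
    exact div_nonneg (hre n) (by positivity)
  have hμnorm : ∀ n, ‖μ n‖ ≤ c := by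
    intro n
    rw [hμdef]
    simp only [norm_div, hknorm n]
    rw [div_le_iff₀ (pow_pos (hkpos n) 2)]
    exact hnorm1 n
  -- uniform bound for the resolvent on the compact set K
  set K : Set ℂ := {z : ℂ | 0 ≤ z.re} ∩ Metric.closedBall 0 c with hK
  have hKcompact : IsCompact K :=
    (isCompact_closedBall 0 c).inter_left (isClosed_le continuous_const Complex.continuous_re)
  have hK0 : (0 : ℂ) ∈ K := ⟨by simp, by simpa using hc0⟩
  have hcont : ContinuousOn (fun z : ℂ => ‖R4 z‖) K := by
    intro z hz
    have hu := hres z hz.1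
    have h1 : ContinuousAt Ring.inverse (algebraMap ℂ (Matrix (Fin m) (Fin m) ℂ) z - Γ₄) :=
      hu.unit_spec ▸ NormedRing.inverse_continuousAt hu.unit
    have h0 : ContinuousAt (fun w : ℂ => algebraMap ℂ (Matrix (Fin m) (Fin m) ℂ) w - Γ₄) z :=
      ((continuous_algebraMap ℂ _).sub continuous_const).continuousAt
    exact ((ContinuousAt.comp (g := Ring.inverse)
      (f := fun w : ℂ => algebraMap ℂ (Matrix (Fin m) (Fin m) ℂ) w - Γ₄) (x := z) h1 h0).norm).continuousWithinAt
  obtain ⟨z₀, _, hmax⟩ := hKcompact.exists_isMaxOn ⟨0, hK0⟩ hcont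
  set C : ℝ := ‖R4 z₀‖ with hCdef
  have hCbound : ∀ z ∈ K, ‖R4 z‖ ≤ C := hmax
  have hμK : ∀ n, μ n ∈ K := fun n => ⟨hμre n, by simpa using hμnorm n⟩
  -- uniform bound on the eigenvalues
  set R : ℝ := (‖Γ₁‖ + ‖Γ₂‖ * C * ‖Γ₃‖) * ‖(1 : Matrix (Fin r) (Fin r) ℂ)‖ with hRdef
  have hnorm2 : ∀ n, ‖lam n‖ ≤ R := by
    intro n
    have h1 : ‖lam n‖ ≤ ‖A (μ n)‖ * ‖(1 : Matrix (Fin r) (Fin r) ℂ)‖ :=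
      spectrum.norm_le_norm_mul_of_mem (hstep n)
    have h2 : ‖A (μ n)‖ ≤ ‖Γ₁‖ + ‖Γ₂‖ * C * ‖Γ₃‖ := by
      rw [hA]
      refine le_trans (norm_add_le _ _) ?_
      have h3 : ‖Γ₂ * R4 (μ n) * Γ₃‖ ≤ ‖Γ₂‖ * ‖R4 (μ n)‖ * ‖Γ₃‖ :=
        le_trans (Matrix.linfty_opNorm_mul _ _)
          (mul_le_mul_of_nonneg_right (Matrix.linfty_opNorm_mul _ _) (norm_nonneg _))
      have h4 : ‖R4 (μ n)‖ ≤ C := hCbound _ (hμK n)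
      have := mul_le_mul_of_nonneg_right
        (mul_le_mul_of_nonneg_left h4 (norm_nonneg Γ₂)) (norm_nonneg Γ₃)
      gcongr
      exact le_trans h3 this
    calc ‖lam n‖ ≤ ‖A (μ n)‖ * ‖(1 : Matrix (Fin r) (Fin r) ℂ)‖ := h1
      _ ≤ (‖Γ₁‖ + ‖Γ₂‖ * C * ‖Γ₃‖) * ‖(1 : Matrix (Fin r) (Fin r) ℂ)‖ :=
          mul_le_mul_of_nonneg_right h2 (norm_nonneg _)
  have hR0 : 0 ≤ R := le_trans (norm_nonneg (lam 0)) (hnorm2 0)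
  -- μ n → 0
  have hμ0 : Tendsto μ atTop (𝓝 0) := by
    have hbound : ∀ n : ℕ, ‖μ n‖ ≤ R / ((n : ℝ) + 1)^2 := by
      intro n
      rw [hμdef]
      simp only [norm_div, hknorm n]
      have hkn : ((n : ℝ) + 1)^2 ≤ (k n)^2 := by
        have h := hk n
        nlinarith [Nat.cast_nonneg (α := ℝ) n]
      exact div_le_div₀ hR0 (hnorm2 n) (by positivity) hkn
    have hlim : Tendsto (fun n : ℕ => R / ((n : ℝ) + 1)^2) atTop (𝓝 0) := by
      apply Tendsto.div_atTop tendsto_const_nhds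
      have h1 : Tendsto (fun n : ℕ => (n : ℝ) + 1) atTop atTop :=
        tendsto_atTop_add_const_right _ 1 tendsto_natCast_atTop_atTop
      exact (tendsto_pow_atTop two_ne_zero).comp h1
    exact squeeze_zero_norm hbound hlim
  -- extract a convergent subsequence of the eigenvalues
  obtain ⟨l, _, φ, hφmono, hφtend⟩ := (isCompact_closedBall (0:ℂ) R).tendsto_subseq
    (fun n => mem_closedBall_zero_iff.mpr (hnorm2 n))
  have hlre : 0 ≤ l.re := by
    have h1 : Tendsto (fun n => (lam (φ n)).re) atTop (𝓝 l.re) :=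
      (Complex.continuous_re.tendsto l).comp hφtend
    exact ge_of_tendsto' h1 (fun n => hre (φ n))
  -- the perturbed Schur complements converge to the Schur complement
  have hR40 : ContinuousAt R4 0 := by
    have hu := hres 0 le_rfl
    have h1 : ContinuousAt Ring.inverse (algebraMap ℂ (Matrix (Fin m) (Fin m) ℂ) (0:ℂ) - Γ₄) :=
      hu.unit_spec ▸ NormedRing.inverse_continuousAt hu.unit
    have h0 : ContinuousAt (fun w : ℂ => algebraMap ℂ (Matrix (Fin m) (Fin m) ℂ) w - Γ₄) (0:ℂ) :=
      ((continuous_algebraMap ℂ _).sub continuous_const).continuousAt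
    exact ContinuousAt.comp (g := Ring.inverse)
      (f := fun w : ℂ => algebraMap ℂ (Matrix (Fin m) (Fin m) ℂ) w - Γ₄) (x := (0:ℂ)) h1 h0
  have hmulcont : Continuous (fun B : Matrix (Fin m) (Fin m) ℂ => Γ₁ + Γ₂ * B * Γ₃) :=
    continuous_const.add ((continuous_const.matrix_mul continuous_id).matrix_mul continuous_const)
  have hAt : Tendsto (fun n => A (μ n)) atTop (𝓝 (A 0)) :=
    (hmulcont.tendsto (R4 0)).comp (hR40.tendsto.comp hμ0)
  -- pass to the limit in the determinant
  have hdetc : Continuous (Matrix.det : Matrix (Fin r) (Fin r) ℂ → ℂ) := continuous_id.matrix_det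
  have hpair : Tendsto (fun n => algebraMap ℂ (Matrix (Fin r) (Fin r) ℂ) (lam (φ n)) - A (μ (φ n)))
      atTop (𝓝 (algebraMap ℂ (Matrix (Fin r) (Fin r) ℂ) l - A 0)) :=
    (((continuous_algebraMap ℂ _).tendsto l).comp hφtend).sub (hAt.comp hφmono.tendsto_atTop)
  have hdetlim : Tendsto
      (fun n => (algebraMap ℂ (Matrix (Fin r) (Fin r) ℂ) (lam (φ n)) - A (μ (φ n))).det)
      atTop (𝓝 ((algebraMap ℂ (Matrix (Fin r) (Fin r) ℂ) l - A 0).det)) :=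
    (hdetc.tendsto _).comp hpair
  have hdetzero : ∀ n, (algebraMap ℂ (Matrix (Fin r) (Fin r) ℂ) (lam n) - A (μ n)).det = 0 := by
    intro n
    have h := hstep n
    rw [spectrum.mem_iff] at h
    by_contra hne
    exact h ((Matrix.isUnit_iff_isUnit_det _).mpr (isUnit_iff_ne_zero.mpr hne))
  have hdet0 : (algebraMap ℂ (Matrix (Fin r) (Fin r) ℂ) l - A 0).det = 0 := by
    have heq : (fun n => (algebraMap ℂ (Matrix (Fin r) (Fin r) ℂ) (lam (φ n)) - A (μ (φ n))).det)
        = fun _ : ℕ => (0 : ℂ) := funext fun n => hdetzero (φ n)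
    rw [heq] at hdetlim
    exact tendsto_nhds_unique hdetlim tendsto_const_nhds
  have hmem0 : l ∈ spectrum ℂ (A 0) := by
    rw [spectrum.mem_iff]
    intro hu
    rw [Matrix.isUnit_iff_isUnit_det, hdet0] at hu
    exact not_isUnit_zero hu
  have hA0 : A 0 = Γ₁ - Γ₂ * Γ₄⁻¹ * Γ₃ := by
    rw [hA, hR4]
    simp only
    have h1 : algebraMap ℂ (Matrix (Fin m) (Fin m) ℂ) (0:ℂ) - Γ₄ = -Γ₄ := by simp
    rw [h1]
    have h2 : Ring.inverse (-Γ₄) = -(Γ₄⁻¹) := by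
      rw [← Matrix.nonsing_inv_eq_ringInverse]
      haveI : Invertible (-1 : ℂ) := invertibleOfNonzero (by norm_num)
      rw [← neg_one_smul ℂ Γ₄, Matrix.inv_smul _ _ hΓ₄, invOf_eq_inv,
        show ((-1:ℂ))⁻¹ = -1 by norm_num, neg_one_smul]
    rw [h2]
    simp [Matrix.mul_neg, Matrix.neg_mul, sub_eq_add_neg]
  rw [hA0] at hmem0
  exact absurd (hHurwitz₀ l hmem0) (not_lt.mpr hlre)
end

section
/- Let Â ∈ M_m(ℂ) be strictly Hurwitz (Re⟨ψ, Âψ⟩ < 0 for all ψ ≠ 0), and let A = Σ_{ij} Â_{ij} a_i* a_j on the m-mode bosonic Fock space (where a_i are annihilation operators). Then for every N, the restriction of A to the span of number states with total occupation ≤ N has kernel span{|0,...,0⟩}. -/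
open Matrix

/-- `shiftMode μ i j` is the occupation-number vector `μ - e_i + e_j`
(one quantum moved from mode `i` to mode `j`). -/
def shiftMode {m : ℕ} (μ : Fin m → ℕ) (i j : Fin m) : Fin m → ℕ :=
  Function.update (Function.update μ i (μ i - 1)) j
    ((Function.update μ i (μ i - 1)) j + 1)

/-- The number-basis coefficient action of `A = Σ_{ij} Â_{ij} a_i* a_j`:
for `ψ = Σ_ν f(ν)|ν⟩`, the coefficient of `Aψ` at the occupation vector `μ`. -/
noncomputable def quadraticHamAction {m : ℕ} (Ahat : Matrix (Fin m) (Fin m) ℂ)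
    (f : (Fin m → ℕ) → ℂ) (μ : Fin m → ℕ) : ℂ :=
  ∑ i : Fin m, ∑ j : Fin m,
    Ahat i j * (Real.sqrt (μ i) : ℂ) * (Real.sqrt ((shiftMode μ i j) j) : ℂ) *
      f (shiftMode μ i j)

/-- Add one quantum in mode `i`. -/
def addE {m : ℕ} (i : Fin m) (ν : Fin m → ℕ) : Fin m → ℕ :=
  Function.update ν i (ν i + 1)

/-- Remove one quantum in mode `i`. -/
def subE {m : ℕ} (i : Fin m) (μ : Fin m → ℕ) : Fin m → ℕ :=
  Function.update μ i (μ i - 1)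

lemma shiftMode_eq {m : ℕ} (μ : Fin m → ℕ) (i j : Fin m) :
    shiftMode μ i j = addE j (subE i μ) := rfl

lemma shiftMode_apply_self {m : ℕ} (μ : Fin m → ℕ) (i j : Fin m) :
    shiftMode μ i j j = subE i μ j + 1 := by
  simp [shiftMode, subE]

lemma addE_apply_self {m : ℕ} (i : Fin m) (ν : Fin m → ℕ) :
    addE i ν i = ν i + 1 := by simp [addE]

lemma subE_le {m : ℕ} (i k : Fin m) (μ : Fin m → ℕ) : subE i μ k ≤ μ k := by
  by_cases hk : k = i
  · subst hk; simp [subE]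
  · simp [subE, Function.update_of_ne hk]

lemma addE_subE {m : ℕ} (i : Fin m) (μ : Fin m → ℕ) (h : 1 ≤ μ i) :
    addE i (subE i μ) = μ := by
  funext k
  by_cases hk : k = i
  · subst hk; simp [addE, subE]; omega
  · simp [addE, subE, Function.update_of_ne hk]

lemma subE_addE {m : ℕ} (i : Fin m) (ν : Fin m → ℕ) :
    subE i (addE i ν) = ν := by
  funext k
  by_cases hk : k = i
  · subst hk; simp [addE, subE]
  · simp [addE, subE, Function.update_of_ne hk]

lemma subE_apply_self_add_one {m : ℕ} (i : Fin m) (μ : Fin m → ℕ) (h : 1 ≤ μ i) :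
    subE i μ i + 1 = μ i := by
  simp [subE]; omega

/-- Reindexing lemma: shift the summation variable by one quantum in mode `i`. -/
lemma reindex_sum {m N : ℕ} (f : (Fin m → ℕ) → ℂ)
    (hsupp : ∀ ν : Fin m → ℕ, N < ∑ k, ν k → f ν = 0) (i : Fin m)
    (g : (Fin m → ℕ) → ℂ) :
    ∑ μ ∈ Finset.Iic (fun _ : Fin m => N),
        (starRingEnd ℂ) (f μ) * (Real.sqrt (μ i) : ℂ) * g (subE i μ)
      = ∑ ν ∈ Finset.Iic (fun _ : Fin m => N),
        (starRingEnd ℂ) (f (addE i ν)) * (Real.sqrt (ν i + 1) : ℂ) * g ν := by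
  classical
  rw [← Finset.sum_filter_of_ne (p := fun μ : Fin m → ℕ => 1 ≤ μ i)
    (by
      intro μ _ hne
      by_contra h
      have : μ i = 0 := by omega
      simp [this] at hne)]
  rw [← Finset.sum_filter_of_ne (s := Finset.Iic (fun _ : Fin m => N))
    (p := fun ν : Fin m → ℕ => ν i < N)
    (by
      intro ν _ hne
      by_contra h
      have hf : f (addE i ν) = 0 := by
        apply hsupp
        have h1 : addE i ν i ≤ ∑ k, addE i ν k :=
          Finset.single_le_sum (fun k _ => Nat.zero_le _) (Finset.mem_univ i)
        rw [addE_apply_self] at h1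
        omega
      simp [hf] at hne)]
  apply Finset.sum_nbij' (i := subE i) (j := addE i)
  · intro μ hμ
    rw [Finset.mem_filter, Finset.mem_Iic, Pi.le_def] at hμ ⊢
    obtain ⟨hle, h1⟩ := hμ
    refine ⟨fun k => le_trans (subE_le i k μ) (hle k), ?_⟩
    have e1 := subE_apply_self_add_one i μ h1
    have e2 := hle i
    omega
  · intro ν hν
    rw [Finset.mem_filter, Finset.mem_Iic, Pi.le_def] at hν ⊢
    obtain ⟨hle, h1⟩ := hν
    constructor
    · intro k
      by_cases hk : k = i
      · subst hk; rw [addE_apply_self]; omega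
      · simpa [addE, Function.update_of_ne hk] using hle k
    · rw [addE_apply_self]; omega
  · intro μ hμ
    rw [Finset.mem_filter] at hμ
    exact addE_subE i μ hμ.2
  · intro ν _
    exact subE_addE i ν
  · intro μ hμ
    rw [Finset.mem_filter] at hμ
    rw [addE_subE i μ hμ.2]
    have e1 : ((subE i μ i : ℝ) + 1) = (μ i : ℝ) := by
      have := subE_apply_self_add_one i μ hμ.2
      exact_mod_cast this
    rw [e1]

/-- If `Â` is strictly Hurwitz, then the kernel of `A = Σ Â_{ij} a_i* a_j`
restricted to states of total occupation ≤ N is exactly the span of the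
vacuum `|0,…,0⟩`. -/
theorem quadratic_hamiltonian_kernel_vacuum {m : ℕ}
    (Ahat : Matrix (Fin m) (Fin m) ℂ)
    (hHurwitz : ∀ ψ : Fin m → ℂ, ψ ≠ 0 → (star ψ ⬝ᵥ (Ahat *ᵥ ψ)).re < 0)
    (N : ℕ) (f : (Fin m → ℕ) → ℂ)
    (hsupp : ∀ ν : Fin m → ℕ, N < ∑ i, ν i → f ν = 0) :
    (∀ μ : Fin m → ℕ, quadraticHamAction Ahat f μ = 0) ↔
      ∀ ν : Fin m → ℕ, ν ≠ 0 → f ν = 0 := by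
  classical
  constructor
  · intro hA
    set S : Finset (Fin m → ℕ) := Finset.Iic (fun _ => N) with hS
    set w : (Fin m → ℕ) → Fin m → ℂ :=
      fun ν i => (Real.sqrt (ν i + 1) : ℂ) * f (addE i ν) with hw
    -- main identity
    have main : ∑ μ ∈ S, (starRingEnd ℂ) (f μ) * quadraticHamAction Ahat f μ
        = ∑ κ ∈ S, (star (w κ) ⬝ᵥ (Ahat *ᵥ w κ)) := by
      have lhs : ∑ μ ∈ S, (starRingEnd ℂ) (f μ) * quadraticHamAction Ahat f μ
          = ∑ i : Fin m, ∑ j : Fin m, ∑ μ ∈ S,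
              (starRingEnd ℂ) (f μ) * (Real.sqrt (μ i) : ℂ) *
                (Ahat i j * (Real.sqrt (subE i μ j + 1) : ℂ) * f (addE j (subE i μ))) := by
        simp only [quadraticHamAction, Finset.mul_sum]
        rw [Finset.sum_comm]
        refine Finset.sum_congr rfl fun i _ => ?_
        rw [Finset.sum_comm]
        refine Finset.sum_congr rfl fun j _ => Finset.sum_congr rfl fun μ _ => ?_
        rw [shiftMode_apply_self, shiftMode_eq]
        push_cast
        ring
      have rhs : ∑ κ ∈ S, (star (w κ) ⬝ᵥ (Ahat *ᵥ w κ))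
          = ∑ i : Fin m, ∑ j : Fin m, ∑ κ ∈ S,
              (starRingEnd ℂ) (f (addE i κ)) * (Real.sqrt (κ i + 1) : ℂ) *
                (Ahat i j * (Real.sqrt (κ j + 1) : ℂ) * f (addE j κ)) := by
        simp only [dotProduct, mulVec, Pi.star_apply, Finset.mul_sum]
        rw [Finset.sum_comm]
        refine Finset.sum_congr rfl fun i _ => ?_
        rw [Finset.sum_comm]
        refine Finset.sum_congr rfl fun j _ => Finset.sum_congr rfl fun κ _ => ?_
        simp only [hw, star_mul', Complex.star_def, Complex.conj_ofReal]
        ring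
      rw [lhs, rhs]
      refine Finset.sum_congr rfl fun i _ => Finset.sum_congr rfl fun j _ => ?_
      exact reindex_sum f hsupp i
        (fun κ => Ahat i j * (Real.sqrt (κ j + 1) : ℂ) * f (addE j κ))
    have sum0 : ∑ κ ∈ S, (star (w κ) ⬝ᵥ (Ahat *ᵥ w κ)) = 0 := by
      rw [← main]
      simp [hA]
    have hterm : ∀ κ ∈ S, (star (w κ) ⬝ᵥ (Ahat *ᵥ w κ)).re ≤ 0 := by
      intro κ _
      by_cases h : w κ = 0
      · simp [h]
      · exact le_of_lt (hHurwitz _ h)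
    have hre : ∑ κ ∈ S, (star (w κ) ⬝ᵥ (Ahat *ᵥ w κ)).re = 0 := by
      rw [← Complex.re_sum, sum0, Complex.zero_re]
    have hwz : ∀ κ ∈ S, w κ = 0 := by
      intro κ hκ
      by_contra h
      exact absurd ((Finset.sum_eq_zero_iff_of_nonpos hterm).1 hre κ hκ)
        (ne_of_lt (hHurwitz _ h))
    intro ν hν
    by_contra hf0
    have hsum : ∑ k, ν k ≤ N := not_lt.1 fun h => hf0 (hsupp ν h)
    obtain ⟨i, hi⟩ : ∃ i, ν i ≠ 0 := by
      by_contra h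
      push_neg at h
      exact hν (funext h)
    have h1 : 1 ≤ ν i := Nat.one_le_iff_ne_zero.2 hi
    have hκS : subE i ν ∈ S := by
      rw [hS, Finset.mem_Iic]
      intro k
      exact le_trans (subE_le i k ν)
        (le_trans (Finset.single_le_sum (fun k _ => Nat.zero_le _) (Finset.mem_univ k)) hsum)
    have hzero : (Real.sqrt ((subE i ν i : ℝ) + 1) : ℂ) * f (addE i (subE i ν)) = 0 :=
      congrFun (hwz _ hκS) i
    have e1 : ((subE i ν i : ℝ) + 1) = (ν i : ℝ) := by
      have := subE_apply_self_add_one i ν h1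
      exact_mod_cast this
    rw [addE_subE i ν h1, e1] at hzero
    rcases mul_eq_zero.1 hzero with h | h
    · exfalso
      have hpos : Real.sqrt (ν i) ≠ 0 := by
        have : (0 : ℝ) < (ν i : ℝ) := by exact_mod_cast Nat.pos_of_ne_zero hi
        positivity
      exact hpos (by exact_mod_cast h)
    · exact hf0 h
  · intro hf μ
    unfold quadraticHamAction
    refine Finset.sum_eq_zero fun i _ => Finset.sum_eq_zero fun j _ => ?_
    have hz : f (shiftMode μ i j) = 0 := by
      apply hf
      intro h0
      have := congrFun h0 j
      rw [shiftMode_apply_self] at this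
      simp at this
    rw [hz, mul_zero]
end

section
/- Unitarity of the Zeno scattering matrix in the 'no scattering, nontrivial damping' case: let L ∈ B(h_f, h_z) (playing the role of L¹_zf), H = H* ∈ B(h_f) (playing H²_ff), and suppose A = −(1/2)L*L − iH is invertible on h_f. Then Ŝ = I_z + L A^{−1} L* is a unitary operator on h_z (equivalently, the Cayley-type transform I + L(−(1/2)L*L − iH)^{−1}L* is unitary). -/
open Matrix

/-- Unitarity of the Zeno scattering matrix in the "no scattering, nontrivial
damping" case: with `A = −(1/2)L*L − iH` invertible (`H` Hermitian),
`Ŝ = I + L A⁻¹ L*` is unitary. -/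
theorem zeno_scattering_cayley_unitary {nz nf : ℕ}
    (L : Matrix (Fin nz) (Fin nf) ℂ) (H : Matrix (Fin nf) (Fin nf) ℂ)
    (hH : H.IsHermitian)
    (hA : IsUnit (-(1 / 2 : ℂ) • (Lᴴ * L) - Complex.I • H).det) :
    let A : Matrix (Fin nf) (Fin nf) ℂ := -(1 / 2 : ℂ) • (Lᴴ * L) - Complex.I • H
    let S : Matrix (Fin nz) (Fin nz) ℂ := 1 + L * A⁻¹ * Lᴴ
    Sᴴ * S = 1 ∧ S * Sᴴ = 1 := by
  intro A S
  have hAH : Aᴴ = -(1 / 2 : ℂ) • (Lᴴ * L) + Complex.I • H := by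
    show (-(1 / 2 : ℂ) • (Lᴴ * L) - Complex.I • H)ᴴ = _
    rw [conjTranspose_sub, conjTranspose_smul, conjTranspose_smul,
      conjTranspose_mul, conjTranspose_conjTranspose, hH.eq]
    simp [Complex.ext_iff, sub_eq_add_neg, neg_smul]
  have hLL : Lᴴ * L = -(A + Aᴴ) := by
    rw [hAH]
    show _ = -((-(1 / 2 : ℂ) • (Lᴴ * L) - Complex.I • H) + _)
    module
  have hAdet : IsUnit A.det := hA
  have hAHdet : IsUnit (Aᴴ).det := by
    rw [det_conjTranspose]; exact hAdet.star
  have hA1 : A⁻¹ * A = 1 := nonsing_inv_mul A hAdet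
  have hA2 : A * A⁻¹ = 1 := mul_nonsing_inv A hAdet
  have hB1 : (Aᴴ)⁻¹ * Aᴴ = 1 := nonsing_inv_mul _ hAHdet
  have hB2 : Aᴴ * (Aᴴ)⁻¹ = 1 := mul_nonsing_inv _ hAHdet
  have hSH : Sᴴ = 1 + L * (Aᴴ)⁻¹ * Lᴴ := by
    show (1 + L * A⁻¹ * Lᴴ)ᴴ = _
    rw [conjTranspose_add, conjTranspose_one, conjTranspose_mul,
      conjTranspose_mul, conjTranspose_conjTranspose, conjTranspose_nonsing_inv]
    rw [Matrix.mul_assoc]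
  have hS : S = 1 + L * A⁻¹ * Lᴴ := rfl
  clear_value S
  clear_value A
  have central1 : (Aᴴ)⁻¹ + A⁻¹ + (Aᴴ)⁻¹ * (Lᴴ * L) * A⁻¹ = 0 := by
    rw [hLL]
    have : (Aᴴ)⁻¹ * -(A + Aᴴ) * A⁻¹ = -((Aᴴ)⁻¹ * (A * A⁻¹) + (Aᴴ)⁻¹ * Aᴴ * A⁻¹) := by
      noncomm_ring
    rw [this, hA2, hB1]
    noncomm_ring
  have central2 : A⁻¹ + (Aᴴ)⁻¹ + A⁻¹ * (Lᴴ * L) * (Aᴴ)⁻¹ = 0 := by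
    rw [hLL]
    have : A⁻¹ * -(A + Aᴴ) * (Aᴴ)⁻¹ = -((A⁻¹ * A) * (Aᴴ)⁻¹ + A⁻¹ * (Aᴴ * (Aᴴ)⁻¹)) := by
      noncomm_ring
    rw [this, hA1, hB2]
    noncomm_ring
  constructor
  · calc Sᴴ * S = 1 + L * ((Aᴴ)⁻¹ + A⁻¹ + (Aᴴ)⁻¹ * (Lᴴ * L) * A⁻¹) * Lᴴ := by
          rw [hSH, hS]
          simp only [Matrix.mul_add, Matrix.add_mul, Matrix.mul_assoc, Matrix.one_mul, Matrix.mul_one]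
          abel
      _ = 1 := by rw [central1]; simp
  · calc S * Sᴴ = 1 + L * (A⁻¹ + (Aᴴ)⁻¹ + A⁻¹ * (Lᴴ * L) * (Aᴴ)⁻¹) * Lᴴ := by
          rw [hSH, hS]
          simp only [Matrix.mul_add, Matrix.add_mul, Matrix.mul_assoc, Matrix.one_mul, Matrix.mul_one]
          abel
      _ = 1 := by rw [central2]; simp
end

section
/- For the Λ-system: with γ, g > 0, the operator A = −(γ/2) I ⊗ a*a + g(|e⟩⟨g1| ⊗ a − |g1⟩⟨e| ⊗ a*) on ℂ³ ⊗ ℓ²(ℕ) annihilates exactly the two-dimensional space spanned by |g1⟩⊗|0⟩ and |g2⟩⊗|0⟩; i.e. these two vectors lie in ker A, and no vector outside their span (within any finite particle-number truncation) is annihilated by A. -/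
/-- Coefficient action of the Λ-system operator
`A = −(γ/2) I ⊗ a*a + g(|e⟩⟨g1| ⊗ a − |g1⟩⟨e| ⊗ a*)` on `ℂ³ ⊗ ℓ²(ℕ)`,
with basis labels `g1 = 0`, `g2 = 1`, `e = 2` for `ℂ³` and the number basis
for the mode: `ψ = Σ f(s,n)|s⟩⊗|n⟩`. -/
noncomputable def lambdaSystemAction (γ g : ℝ) (f : Fin 3 → ℕ → ℂ)
    (s : Fin 3) (n : ℕ) : ℂ :=
  -((γ : ℂ) / 2) * n * f s n +
    (g : ℂ) * ((if s = 2 then (Real.sqrt (n + 1) : ℂ) * f 0 (n + 1) else 0) -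
      (if s = 0 then (Real.sqrt n : ℂ) * f 2 (n - 1) else 0))

/-- Λ-system Zeno subspace: for `γ, g > 0`, within any finite photon-number
truncation, the kernel of `A` is exactly the span of `|g1⟩⊗|0⟩` and
`|g2⟩⊗|0⟩`. -/
theorem lambda_system_kernel (γ g : ℝ) (hγ : 0 < γ) (hg : 0 < g)
    (N : ℕ) (f : Fin 3 → ℕ → ℂ) (hsupp : ∀ s : Fin 3, ∀ n : ℕ, N < n → f s n = 0) :
    (∀ s : Fin 3, ∀ n : ℕ, lambdaSystemAction γ g f s n = 0) ↔
      ∀ s : Fin 3, ∀ n : ℕ, ¬(n = 0 ∧ (s = 0 ∨ s = 1)) → f s n = 0 := by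
  have hgC : (g : ℂ) ≠ 0 := by exact_mod_cast hg.ne'
  constructor
  · intro h
    -- key: f 2 n = 0 for all n
    have h2 : ∀ n, f 2 n = 0 := by
      intro n
      have e2 := h 2 n
      have e0 := h 0 (n + 1)
      simp only [lambdaSystemAction, if_pos rfl, if_neg (by decide : (2 : Fin 3) ≠ 0),
        if_neg (by decide : (0 : Fin 3) ≠ 2), if_pos rfl] at e2 e0
      have hs : ((Real.sqrt (n + 1) : ℝ) : ℂ) * ((Real.sqrt (n + 1) : ℝ) : ℂ)
          = ((n : ℂ) + 1) := by
        rw [← Complex.ofReal_mul, Real.mul_self_sqrt (by positivity)]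
        push_cast; ring
      have key : ((((γ : ℂ) / 2) ^ 2 * n + (g : ℂ) ^ 2) * ((n : ℂ) + 1)) * f 2 n = 0 := by
        push_cast at e2 e0 ⊢
        linear_combination (-((γ : ℂ) / 2) * ((n : ℂ) + 1)) * e2
          - (g : ℂ) * ((Real.sqrt (n + 1) : ℝ) : ℂ) * e0
          - (g : ℂ) ^ 2 * f 2 n * hs
      have hc : ((((γ : ℂ) / 2) ^ 2 * n + (g : ℂ) ^ 2) * ((n : ℂ) + 1)) ≠ 0 := by
        have : (((((γ : ℝ) / 2) ^ 2 * n + g ^ 2) * ((n : ℝ) + 1)) : ℝ) ≠ 0 := by positivity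
        intro hzero
        apply this
        have := hzero
        push_cast at this
        exact_mod_cast this
      exact (mul_eq_zero.mp key).resolve_left hc
    have h0 : ∀ n, f 0 (n + 1) = 0 := by
      intro n
      have e2 := h 2 n
      simp only [lambdaSystemAction, if_pos rfl, if_neg (by decide : (2 : Fin 3) ≠ 0),
        h2] at e2
      have hsne : ((Real.sqrt (n + 1) : ℝ) : ℂ) ≠ 0 := by
        exact_mod_cast (Real.sqrt_pos.mpr (by positivity)).ne'
      simp only [mul_zero, neg_mul, zero_mul, neg_zero, zero_add, sub_zero] at e2
      rcases mul_eq_zero.mp e2 with h' | h'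
      · exact absurd h' hgC
      · rcases mul_eq_zero.mp h' with h'' | h''
        · exact absurd h'' hsne
        · exact h''
    intro s n hn
    push_neg at hn
    fin_cases s
    · -- s = 0
      cases n with
      | zero => exact absurd rfl (hn rfl).1
      | succ m => exact h0 m
    · -- s = 1
      cases n with
      | zero => exact absurd rfl (hn rfl).2
      | succ m =>
        have e1 := h 1 (m + 1)
        simp only [lambdaSystemAction, if_neg (by decide : (1 : Fin 3) ≠ 2),
          if_neg (by decide : (1 : Fin 3) ≠ 0), sub_zero, mul_zero, add_zero] at e1
        have hγC : -((γ : ℂ) / 2) * ((m : ℂ) + 1) ≠ 0 := by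
          have : ((γ : ℂ)) ≠ 0 := by exact_mod_cast hγ.ne'
          simp only [neg_mul, neg_ne_zero]
          apply mul_ne_zero (by simpa using this)
          exact Nat.cast_add_one_ne_zero m
        push_cast at e1
        rcases mul_eq_zero.mp e1 with h' | h'
        · exact absurd h' hγC
        · exact h'
    · exact h2 n
  · intro h s n
    have hf2 : ∀ m, f 2 m = 0 := fun m =>
      h 2 m (by rintro ⟨_, h' | h'⟩ <;> exact absurd h' (by decide))
    have hfn : (n : ℂ) * f s n = 0 := by
      cases n with
      | zero => simp
      | succ m => rw [h s (m + 1) (by rintro ⟨h', _⟩; exact Nat.succ_ne_zero m h'), mul_zero]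
    have hf0 : f 0 (n + 1) = 0 :=
      h 0 (n + 1) (by rintro ⟨h', _⟩; exact Nat.succ_ne_zero n h')
    simp only [lambdaSystemAction, hf0, hf2, mul_zero, sub_zero, zero_sub]
    rw [mul_assoc]
    rw [hfn]
    simp
end
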